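/- Let H = G_1 ⊗ G_2 be the join of graphs G_1 and G_2 with n_1 and n_2 vertices respectively, where neither G_1 nor G_2 is complete. Then the monophonic number of H satisfies m(H) = min{4, m(G_1), m(G_2)}. -/

import Mathlib

/-!
In the join every vertex of one side is adjacent to every vertex of the other. Hence a chordless
path between two nonadjacent vertices of one side may be routed through any single vertex of the
other side: two nonadjacent vertices on each side form a monophonic set of size 4, and a minimum
monophonic set of `G₁` (which contains a nonadjacent pair, as `G₁` is not complete) stays
monophonic in the join. Conversely, a chordless path of the join that meets both sides has at most
three vertices, so a monophonic set of the join with at most one vertex in `V₂` still covers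
every vertex of `V₁` by chordless paths inside `G₁`; otherwise it has two vertices on each side.
-/

open SimpleGraph

/-- A chordless (induced) path: a path such that the only edges of `G` between
its vertices are the edges of the path. -/
def IsChordlessPath {V : Type*} (G : SimpleGraph V) {x y : V} (p : G.Walk x y) : Prop :=
  p.IsPath ∧ ∀ u v : V, u ∈ p.support → v ∈ p.support → G.Adj u v → s(u, v) ∈ p.edges

/-- `S` is monophonic in `G`: every vertex lies on a chordless (induced) path
between two vertices of `S`. -/
def IsMonophonic {V : Type*} (G : SimpleGraph V) (S : Set V) : Prop :=
  ∀ z : V, ∃ x ∈ S, ∃ y ∈ S, ∃ p : G.Walk x y,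
    IsChordlessPath G p ∧ z ∈ p.support

/-- The monophonic number of `G`: minimum cardinality of a monophonic set. -/
noncomputable def monophonicNumber {V : Type*} (G : SimpleGraph V) : ℕ :=
  sInf {n | ∃ S : Set V, IsMonophonic G S ∧ S.ncard = n}

/-- The join `G₁ ⊗ G₂` of two graphs: their disjoint union together with all
edges between the two vertex sets. -/
def joinGraph {V₁ V₂ : Type*} (G₁ : SimpleGraph V₁) (G₂ : SimpleGraph V₂) :
    SimpleGraph (V₁ ⊕ V₂) where
  Adj x y :=
    match x, y with
    | Sum.inl a, Sum.inl b => G₁.Adj a b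
    | Sum.inr a, Sum.inr b => G₂.Adj a b
    | Sum.inl _, Sum.inr _ => True
    | Sum.inr _, Sum.inl _ => True
  symm := by
    constructor
    rintro (a | a) (b | b) h <;> simp_all only <;> exact h.symm
  loopless := by
    constructor
    rintro (a | a) h
    · exact G₁.irrefl h
    · exact G₂.irrefl h

section ChordlessPath

variable {V W : Type*} {G : SimpleGraph V} {G' : SimpleGraph W} {u v w : V}

theorem IsChordlessPath.nil : IsChordlessPath G (Walk.nil : G.Walk u u) :=
  ⟨.nil, fun _ _ hx hy h ↦ by simp_all⟩

theorem IsChordlessPath.of_cons {h : G.Adj u w} {p : G.Walk w v}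
    (hp : IsChordlessPath G (.cons h p)) : IsChordlessPath G p := by
  have hu : u ∉ p.support := ((Walk.cons_isPath_iff h p).1 hp.1).2
  refine ⟨hp.1.of_cons, fun x y hx hy hxy ↦ ?_⟩
  rcases List.mem_cons.1 (hp.2 x y (by simp [hx]) (by simp [hy]) hxy) with he | he
  · rcases Sym2.eq_iff.1 he with ⟨rfl, -⟩ | ⟨-, rfl⟩ <;> contradiction
  · exact he

theorem IsChordlessPath.exists_eq_cons_of_adj {p : G.Walk u v} (hp : IsChordlessPath G p)
    (hw : w ∈ p.support) (huw : G.Adj u w) : ∃ q : G.Walk w v, p = .cons huw q := by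
  have he := hp.2 u w p.start_mem_support hw huw
  cases p with
  | nil => simp at he
  | cons h q =>
    rcases List.mem_cons.1 he with he | he
    · rcases Sym2.eq_iff.1 he with ⟨-, rfl⟩ | ⟨rfl, rfl⟩
      · exact ⟨q, rfl⟩
      · exact absurd huw G.irrefl
    · exact absurd (q.fst_mem_support_of_mem_edges he) ((Walk.cons_isPath_iff h q).1 hp.1).2

theorem IsChordlessPath.support_eq_of_adj {p : G.Walk u v} (hp : IsChordlessPath G p)
    (huv : G.Adj u v) : p.support = [u, v] := by
  obtain ⟨q, rfl⟩ := hp.exists_eq_cons_of_adj p.end_mem_support huv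
  obtain rfl := (Walk.isPath_iff_nil.1 hp.of_cons.1).eq_nil
  rfl

theorem IsChordlessPath.support_eq_of_adj_of_adj {p : G.Walk u v} (hp : IsChordlessPath G p)
    (hw : w ∈ p.support) (huw : G.Adj u w) (hwv : G.Adj w v) : p.support = [u, w, v] := by
  obtain ⟨q, rfl⟩ := hp.exists_eq_cons_of_adj hw huw
  rw [Walk.support_cons, hp.of_cons.support_eq_of_adj hwv]

theorem IsChordlessPath.ne_and_not_adj {p : G.Walk u v} (hp : IsChordlessPath G p)
    (hw : w ∈ p.support) (hwu : w ≠ u) (hwv : w ≠ v) : u ≠ v ∧ ¬ G.Adj u v := by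
  refine ⟨?_, fun huv ↦ ?_⟩
  · rintro rfl
    rw [(Walk.isPath_iff_nil.1 hp.1).eq_nil] at hw
    exact hwu (by simpa using hw)
  · rw [hp.support_eq_of_adj huv] at hw
    simp_all

theorem exists_isChordlessPath_through (huw : G.Adj u w) (hwv : G.Adj w v) (huv : u ≠ v)
    (hnadj : ¬ G.Adj u v) : ∃ p : G.Walk u v, IsChordlessPath G p ∧ w ∈ p.support := by
  refine ⟨.cons huw (.cons hwv .nil), ⟨by simp [huv, huw.ne, hwv.ne], fun x y hx hy hxy ↦ ?_⟩,
    by simp⟩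
  simp only [Walk.support_cons, Walk.support_nil, List.mem_cons, List.not_mem_nil,
    or_false] at hx hy
  rcases hx with rfl | rfl | rfl <;> rcases hy with rfl | rfl | rfl <;>
    simp_all [G.adj_comm]

theorem isChordlessPath_map_iff (f : G ↪g G') {p : G.Walk u v} :
    IsChordlessPath G' (p.map f.toHom) ↔ IsChordlessPath G p := by
  have hinj : Function.Injective f.toHom := f.injective
  have hedge (x y : V) : s(f x, f y) ∈ (p.map f.toHom).edges ↔ s(x, y) ∈ p.edges := by
    rw [Walk.edges_map]
    exact List.mem_map_of_injective (f := Sym2.map f.toHom) (a := s(x, y)) (Sym2.map.injective hinj)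
  simp only [IsChordlessPath, Walk.isPath_map_iff_of_injective hinj, Walk.support_map,
    List.mem_map]
  refine and_congr_right fun _ ↦ ⟨fun h x y hx hy hxy ↦ ?_, ?_⟩
  · exact (hedge x y).1 (h _ _ ⟨x, hx, rfl⟩ ⟨y, hy, rfl⟩ (f.map_adj_iff.2 hxy))
  · rintro h _ _ ⟨x, hx, rfl⟩ ⟨y, hy, rfl⟩ hxy
    exact (hedge x y).2 (h x y hx hy (f.map_adj_iff.1 hxy))

theorem SimpleGraph.Walk.exists_map_eq_of_forall_mem_range (f : G ↪g G') {a b : V}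
    (p : G'.Walk (f a) (f b)) (hp : ∀ x ∈ p.support, x ∈ Set.range f) :
    ∃ q : G.Walk a b, q.map f.toHom = p := by
  suffices key : ∀ {x y : W} (p : G'.Walk x y), (∀ z ∈ p.support, z ∈ Set.range f) →
      ∀ {a b : V}, f a = x → f b = y → ∃ q : G.Walk a b, (q.map f.toHom).support = p.support by
    obtain ⟨q, hq⟩ := key p hp rfl rfl
    exact ⟨q, Walk.ext_support hq⟩
  intro x y p
  induction p with
  | nil =>
    rintro - a b rfl hb
    obtain rfl := f.injective hb
    exact ⟨.nil, rfl⟩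
  | cons h p ih =>
    rintro hp a b rfl rfl
    obtain ⟨c, rfl⟩ := hp _ (List.mem_cons_of_mem _ p.start_mem_support)
    obtain ⟨q, hq⟩ := ih (fun z hz ↦ hp z (by simp [hz])) rfl rfl
    exact ⟨.cons (f.map_adj_iff.1 h) q, by simp [hq]⟩

theorem IsChordlessPath.exists_comap (f : G ↪g G') {x y : W} {p : G'.Walk x y}
    (hp : IsChordlessPath G' p) (hrange : ∀ z ∈ p.support, z ∈ Set.range f) {a b : V}
    (ha : f a = x) (hb : f b = y) :
    ∃ q : G.Walk a b, IsChordlessPath G q ∧ q.support.map f = p.support := by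
  subst ha hb
  obtain ⟨q, rfl⟩ := Walk.exists_map_eq_of_forall_mem_range f p hrange
  exact ⟨q, (isChordlessPath_map_iff f).1 hp, (Walk.support_map f.toHom q).symm⟩

end ChordlessPath

section Monophonic

variable {V W : Type*} {G : SimpleGraph V} {G' : SimpleGraph W} {S : Set V}

theorem isMonophonic_univ (G : SimpleGraph V) : IsMonophonic G Set.univ :=
  fun z ↦ ⟨z, trivial, z, trivial, .nil, .nil, List.mem_singleton_self z⟩

theorem monophonicNumber_le_ncard (hS : IsMonophonic G S) : monophonicNumber G ≤ S.ncard :=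
  Nat.sInf_le ⟨S, hS, rfl⟩

theorem exists_isMonophonic_ncard_eq (G : SimpleGraph V) :
    ∃ S : Set V, IsMonophonic G S ∧ S.ncard = monophonicNumber G :=
  Nat.sInf_mem (s := {n | ∃ S : Set V, IsMonophonic G S ∧ S.ncard = n})
    ⟨_, _, isMonophonic_univ G, rfl⟩

theorem IsMonophonic.preimage_iso {S : Set W} (hS : IsMonophonic G' S) (e : G ≃g G') :
    IsMonophonic G (e ⁻¹' S) := by
  intro z
  obtain ⟨x, hx, y, hy, p, hp, hz⟩ := hS (e z)
  refine ⟨e.symm x, by simpa using hx, e.symm y, by simpa using hy,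
    p.map e.symm.toEmbedding.toHom, (isChordlessPath_map_iff _).2 hp, ?_⟩
  rw [Walk.support_map]
  exact List.mem_map.2 ⟨e z, hz, e.symm_apply_apply z⟩

theorem monophonicNumber_le_of_iso (e : G ≃g G') : monophonicNumber G ≤ monophonicNumber G' := by
  obtain ⟨S, hS, hcard⟩ := exists_isMonophonic_ncard_eq G'
  calc monophonicNumber G ≤ (e ⁻¹' S).ncard := monophonicNumber_le_ncard (hS.preimage_iso e)
    _ = monophonicNumber G' := by
      rw [Set.ncard_preimage_of_injective_subset_range e.injective (by simp), hcard]

theorem IsMonophonic.exists_ne_not_adj (hS : IsMonophonic G S)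
    (hG : ∃ a b : V, a ≠ b ∧ ¬ G.Adj a b) : ∃ u ∈ S, ∃ v ∈ S, u ≠ v ∧ ¬ G.Adj u v := by
  have key (z : V) : z ∈ S ∨ ∃ u ∈ S, ∃ v ∈ S, u ≠ v ∧ ¬ G.Adj u v := by
    refine or_iff_not_imp_left.2 fun hzS ↦ ?_
    obtain ⟨u, hu, v, hv, p, hp, hz⟩ := hS z
    exact ⟨u, hu, v, hv, hp.ne_and_not_adj hz (ne_of_mem_of_not_mem hu hzS).symm
      (ne_of_mem_of_not_mem hv hzS).symm⟩
  obtain ⟨a, b, hab, hnadj⟩ := hG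
  rcases key a with ha | h
  · rcases key b with hb | h
    · exact ⟨a, ha, b, hb, hab, hnadj⟩
    · exact h
  · exact h

end Monophonic

theorem Set.ncard_preimage_inl_add_ncard_preimage_inr {α β : Type*} {s : Set (α ⊕ β)}
    (hs : s.Finite) : (Sum.inl ⁻¹' s).ncard + (Sum.inr ⁻¹' s).ncard = s.ncard := by
  conv_rhs => rw [← Set.image_preimage_inl_union_image_preimage_inr s]
  rw [Set.ncard_union_eq Set.disjoint_image_inl_image_inr
      (hs.subset (Set.image_preimage_subset _ _)) (hs.subset (Set.image_preimage_subset _ _)),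
    Set.ncard_image_of_injective _ Sum.inl_injective,
    Set.ncard_image_of_injective _ Sum.inr_injective]

section Join

variable {V₁ V₂ : Type*} {G₁ : SimpleGraph V₁} {G₂ : SimpleGraph V₂}

def joinGraphInl (G₁ : SimpleGraph V₁) (G₂ : SimpleGraph V₂) : G₁ ↪g joinGraph G₁ G₂ where
  toEmbedding := Function.Embedding.inl
  map_rel_iff' := Iff.rfl

def joinGraphComm (G₁ : SimpleGraph V₁) (G₂ : SimpleGraph V₂) :
    joinGraph G₁ G₂ ≃g joinGraph G₂ G₁ where
  toEquiv := Equiv.sumComm V₁ V₂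
  map_rel_iff' := by rintro (a | a) (b | b) <;> exact Iff.rfl

theorem IsMonophonic.joinGraph_image_inl {S : Set V₁} (hS : IsMonophonic G₁ S)
    (hG₁ : ∃ a b : V₁, a ≠ b ∧ ¬ G₁.Adj a b) (G₂ : SimpleGraph V₂) :
    IsMonophonic (joinGraph G₁ G₂) (Sum.inl '' S) := by
  obtain ⟨a, ha, b, hb, hab, hnadj⟩ := hS.exists_ne_not_adj hG₁
  rintro (x | y)
  · obtain ⟨u, hu, v, hv, p, hp, hx⟩ := hS x
    refine ⟨_, Set.mem_image_of_mem _ hu, _, Set.mem_image_of_mem _ hv,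
      p.map (joinGraphInl G₁ G₂).toHom, (isChordlessPath_map_iff _).2 hp, ?_⟩
    exact Walk.support_map _ _ ▸ List.mem_map_of_mem hx
  · obtain ⟨p, hp, hy⟩ := exists_isChordlessPath_through (G := joinGraph G₁ G₂)
      (u := .inl a) (w := .inr y) (v := .inl b) trivial trivial (by simpa) hnadj
    exact ⟨_, Set.mem_image_of_mem _ ha, _, Set.mem_image_of_mem _ hb, p, hp, hy⟩

theorem monophonicNumber_joinGraph_le_left (hG₁ : ∃ a b : V₁, a ≠ b ∧ ¬ G₁.Adj a b)
    (G₂ : SimpleGraph V₂) : monophonicNumber (joinGraph G₁ G₂) ≤ monophonicNumber G₁ := by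
  obtain ⟨S, hS, hcard⟩ := exists_isMonophonic_ncard_eq G₁
  calc _ ≤ (Sum.inl '' S).ncard := monophonicNumber_le_ncard (hS.joinGraph_image_inl hG₁ G₂)
    _ = monophonicNumber G₁ := by rw [Set.ncard_image_of_injective _ Sum.inl_injective, hcard]

theorem monophonicNumber_joinGraph_le_right (G₁ : SimpleGraph V₁)
    (hG₂ : ∃ a b : V₂, a ≠ b ∧ ¬ G₂.Adj a b) :
    monophonicNumber (joinGraph G₁ G₂) ≤ monophonicNumber G₂ :=
  (monophonicNumber_le_of_iso (joinGraphComm G₁ G₂)).trans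
    (monophonicNumber_joinGraph_le_left hG₂ G₁)

theorem monophonicNumber_joinGraph_le_four (hG₁ : ∃ a b : V₁, a ≠ b ∧ ¬ G₁.Adj a b)
    (hG₂ : ∃ a b : V₂, a ≠ b ∧ ¬ G₂.Adj a b) : monophonicNumber (joinGraph G₁ G₂) ≤ 4 := by
  obtain ⟨a, b, hab, hnab⟩ := hG₁
  obtain ⟨c, d, hcd, hncd⟩ := hG₂
  have hS : IsMonophonic (joinGraph G₁ G₂) {.inl a, .inl b, .inr c, .inr d} := by
    rintro (x | y)
    · obtain ⟨p, hp, hx⟩ := exists_isChordlessPath_through (G := joinGraph G₁ G₂)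
        (u := .inr c) (w := .inl x) (v := .inr d) trivial trivial (by simpa) hncd
      exact ⟨_, by simp, _, by simp, p, hp, hx⟩
    · obtain ⟨p, hp, hy⟩ := exists_isChordlessPath_through (G := joinGraph G₁ G₂)
        (u := .inl a) (w := .inr y) (v := .inl b) trivial trivial (by simpa) hnab
      exact ⟨_, by simp, _, by simp, p, hp, hy⟩
  refine (monophonicNumber_le_ncard hS).trans_eq (Set.ncard_eq_four.2 ?_)
  exact ⟨_, _, _, _, by simpa, by simp, by simp, by simp, by simp, by simpa, rfl⟩

theorem IsMonophonic.preimage_inl {S : Set (V₁ ⊕ V₂)} (hS : IsMonophonic (joinGraph G₁ G₂) S)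
    (hS₂ : (Sum.inr ⁻¹' S).Subsingleton) : IsMonophonic G₁ (Sum.inl ⁻¹' S) := by
  intro x
  by_cases hxS : Sum.inl x ∈ S
  · exact ⟨x, hxS, x, hxS, .nil, .nil, List.mem_singleton_self x⟩
  obtain ⟨u, hu, v, hv, p, hp, hx⟩ := hS (.inl x)
  obtain ⟨huv, hnadj⟩ := hp.ne_and_not_adj hx (ne_of_mem_of_not_mem hu hxS).symm
    (ne_of_mem_of_not_mem hv hxS).symm
  -- cross pairs are adjacent, and `S` has at most one vertex in `V₂`
  obtain ⟨a, rfl, c, rfl⟩ : ∃ a, u = .inl a ∧ ∃ c, v = .inl c := by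
    rcases u with a | b <;> rcases v with c | d
    · exact ⟨a, rfl, c, rfl⟩
    all_goals first
      | exact absurd trivial hnadj
      | exact absurd (congrArg Sum.inr (hS₂ hu hv)) huv
  -- a vertex `inr y` on `p` would force `p.support = [inl a, inr y, inl c]`, missing `inl x`
  have hp₁ : ∀ z ∈ p.support, z ∈ Set.range Sum.inl := by
    rintro (z | y) hy
    · exact ⟨z, rfl⟩
    · rw [hp.support_eq_of_adj_of_adj hy trivial trivial] at hx
      simp only [List.mem_cons, Sum.inl.injEq, reduceCtorEq, List.not_mem_nil, or_false,
        false_or] at hx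
      rcases hx with rfl | rfl <;> contradiction
  obtain ⟨q, hq, hqp⟩ := hp.exists_comap (joinGraphInl G₁ G₂) hp₁ rfl rfl
  refine ⟨a, hu, c, hv, q, hq, ?_⟩
  rw [← hqp] at hx
  exact (List.mem_map_of_injective Sum.inl_injective).1 hx

theorem IsMonophonic.preimage_inr {S : Set (V₁ ⊕ V₂)} (hS : IsMonophonic (joinGraph G₁ G₂) S)
    (hS₁ : (Sum.inl ⁻¹' S).Subsingleton) : IsMonophonic G₂ (Sum.inr ⁻¹' S) :=
  (hS.preimage_iso (joinGraphComm G₂ G₁)).preimage_inl hS₁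

theorem min_le_monophonicNumber_joinGraph [Finite V₁] [Finite V₂] (G₁ : SimpleGraph V₁)
    (G₂ : SimpleGraph V₂) :
    min 4 (min (monophonicNumber G₁) (monophonicNumber G₂)) ≤
      monophonicNumber (joinGraph G₁ G₂) := by
  obtain ⟨S, hS, hcard⟩ := exists_isMonophonic_ncard_eq (joinGraph G₁ G₂)
  rw [← hcard, ← Set.ncard_preimage_inl_add_ncard_preimage_inr S.toFinite]
  by_cases h₂ : (Sum.inr ⁻¹' S).Subsingleton
  · have := monophonicNumber_le_ncard (hS.preimage_inl h₂)
    omega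
  by_cases h₁ : (Sum.inl ⁻¹' S).Subsingleton
  · have := monophonicNumber_le_ncard (hS.preimage_inr h₁)
    omega
  have := Set.one_lt_ncard_iff_nontrivial.2 (Set.not_subsingleton_iff.1 h₁)
  have := Set.one_lt_ncard_iff_nontrivial.2 (Set.not_subsingleton_iff.1 h₂)
  omega

end Join

/-- For a join `H = G₁ ⊗ G₂` of two non-complete graphs,
`m(H) = min {4, m(G₁), m(G₂)}`. -/
theorem monophonicNumber_join {V₁ V₂ : Type*} [Fintype V₁] [Fintype V₂]
    (G₁ : SimpleGraph V₁) (G₂ : SimpleGraph V₂)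
    (h₁ : ∃ a b : V₁, a ≠ b ∧ ¬ G₁.Adj a b)
    (h₂ : ∃ a b : V₂, a ≠ b ∧ ¬ G₂.Adj a b) :
    monophonicNumber (joinGraph G₁ G₂) =
      min 4 (min (monophonicNumber G₁) (monophonicNumber G₂)) :=
  le_antisymm
    (le_min (monophonicNumber_joinGraph_le_four h₁ h₂)
      (le_min (monophonicNumber_joinGraph_le_left h₁ G₂)
        (monophonicNumber_joinGraph_le_right G₁ h₂)))
    (min_le_monophonicNumber_joinGraph G₁ G₂)
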